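/- Let E be a complex Banach space and let g : ℝ³ → E be twice continuously differentiable with compact support contained in ℝ³ ∖ {0}. Then the function s ↦ ∫_{ℝ³} e^{−is|k|} g(k) dk is Bochner integrable on ℝ, and the limit lim_{t→∞} ∫_{−t}^{t} ( ∫_{ℝ³} e^{−is|k|} g(k) dk ) ds exists in E and equals the Bochner integral ∫_{ℝ} ( ∫_{ℝ³} e^{−is|k|} g(k) dk ) ds. -/

import Mathlib

/-!
In polar coordinates, `∫ e^{-is|k|} g(k) dk = ∫_ℝ e^{-isr} H(r) dr` with
`H(r) = r² ∫_{S²} g(rω) dω` for `r > 0` and `H(r) = 0` for `r ≤ 0`. Since `g` is `C²`, compactly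
supported and vanishes near the origin, `H` is `C²` with compact support, so the oscillatory
integral is the Fourier transform of `H` at `s / 2π`. Two integrations by parts make it
`O(s⁻²)`, hence integrable, and the symmetric integrals converge to its integral.
-/

open MeasureTheory Filter Topology Set Module
open scoped Real FourierTransform

section ParametricIntegral

variable {X : Type*} [TopologicalSpace X] [CompactSpace X] [SecondCountableTopology X]
  [MeasurableSpace X] [BorelSpace X] {ν : Measure X} [IsFiniteMeasure ν]
  {V : Type*} [NormedAddCommGroup V]
  {F : Type*} [NormedAddCommGroup F] [NormedSpace ℝ F] {u : X → V}

theorem continuous_integral_comp_prodMk (hu : Continuous u) {A : ℝ × V → F}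
    (hA : Continuous A) : Continuous fun r : ℝ => ∫ x, A (r, u x) ∂ν := by
  simpa only [Measure.restrict_univ] using
    continuous_parametric_integral_of_continuous (μ := ν)
      (f := fun (r : ℝ) x => A (r, u x)) (by fun_prop) isCompact_univ

theorem hasDerivAt_integral_comp_prodMk [NormedSpace ℝ V] (hu : Continuous u) {A : ℝ × V → F}
    (hA : ContDiff ℝ 1 A) (r₀ : ℝ) :
    HasDerivAt (fun r : ℝ => ∫ x, A (r, u x) ∂ν)
      (∫ x, fderiv ℝ A (r₀, u x) (1, 0) ∂ν) r₀ := by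
  have hA' : Continuous (fderiv ℝ A) := hA.continuous_fderiv one_ne_zero
  obtain ⟨C, hC⟩ := ((isCompact_closedBall r₀ 1).prod
    (isCompact_range hu)).exists_bound_of_continuousOn hA'.continuousOn
  have hbound : ∀ x, ∀ r ∈ Metric.ball r₀ 1, ‖fderiv ℝ A (r, u x) (1, 0)‖ ≤ C := fun x r hr =>
    calc ‖fderiv ℝ A (r, u x) (1, 0)‖ ≤ ‖fderiv ℝ A (r, u x)‖ * ‖((1 : ℝ), (0 : V))‖ :=
          (fderiv ℝ A (r, u x)).le_opNorm _
      _ ≤ C := by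
          rw [Prod.norm_mk, norm_one, norm_zero, max_eq_left zero_le_one, mul_one]
          exact hC _ ⟨Metric.ball_subset_closedBall hr, x, rfl⟩
  have hderiv : ∀ x (r : ℝ), HasDerivAt (fun r : ℝ => A (r, u x))
      (fderiv ℝ A (r, u x) (1, 0)) r := fun x r =>
    ((hA.differentiable one_ne_zero _).hasFDerivAt).comp_hasDerivAt r
      ((hasDerivAt_id r).prodMk (hasDerivAt_const r (u x)))
  have hcont : ∀ r : ℝ, Continuous fun x => A (r, u x) := fun r => by fun_prop
  exact (hasDerivAt_integral_of_dominated_loc_of_deriv_le (Metric.ball_mem_nhds r₀ one_pos)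
    (Eventually.of_forall fun r => (hcont r).aestronglyMeasurable)
    ((hcont r₀).integrable_of_hasCompactSupport (HasCompactSupport.of_compactSpace _))
    (by fun_prop : Continuous fun x => fderiv ℝ A (r₀, u x) (1, 0)).aestronglyMeasurable
    (ae_of_all _ hbound) (integrable_const C) (ae_of_all _ fun x r _ => hderiv x r)).2

theorem contDiff_integral_comp_prodMk [NormedSpace ℝ V] {n : ℕ} (hu : Continuous u)
    {A : ℝ × V → F} (hA : ContDiff ℝ n A) : ContDiff ℝ n fun r : ℝ => ∫ x, A (r, u x) ∂ν := by
  induction n generalizing A with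
  | zero => exact contDiff_zero.2 (continuous_integral_comp_prodMk hu hA.continuous)
  | succ n ih =>
    push_cast at hA ⊢
    have hderiv := hasDerivAt_integral_comp_prodMk (ν := ν) hu (hA.of_le le_add_self)
    refine contDiff_succ_iff_deriv.2 ⟨fun r => (hderiv r).differentiableAt, by simp, ?_⟩
    rw [funext fun r => (hderiv r).deriv]
    exact ih ((hA.fderiv_right le_rfl).clm_apply contDiff_const)

end ParametricIntegral

section Polar

variable {V : Type*} [NormedAddCommGroup V] [NormedSpace ℝ V] [FiniteDimensional ℝ V]
  [Nontrivial V] [MeasurableSpace V] [BorelSpace V] (μ : Measure V) [μ.IsAddHaarMeasure]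
  {E : Type*} [NormedAddCommGroup E] [NormedSpace ℝ E]

theorem integral_eq_integral_Ioi_pow_smul_integral_sphere {f : V → E} (hf : Integrable f μ) :
    ∫ x, f x ∂μ = ∫ r in Ioi (0 : ℝ),
      r ^ (finrank ℝ V - 1) • ∫ ω, f (r • (ω : V)) ∂μ.toSphere := by
  have hμ := μ.measurePreserving_homeomorphUnitSphereProd
  set G : Metric.sphere (0 : V) 1 × Ioi (0 : ℝ) → E := fun p => f ((p.2 : ℝ) • (p.1 : V))
  have hGf : ∀ x : ({0}ᶜ : Set V), G (homeomorphUnitSphereProd V x) = f x := fun x => by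
    simp only [G, homeomorphUnitSphereProd_apply_snd_coe, homeomorphUnitSphereProd_apply_fst_coe,
      smul_inv_smul₀ (norm_ne_zero_iff.2 x.2)]
  have hms : MeasurableSet ({0}ᶜ : Set V) := (measurableSet_singleton _).compl
  have hf_compl : Integrable (fun x : ({0}ᶜ : Set V) => f x) (μ.comap (↑)) := by
    have := (MeasurableEmbedding.subtype_coe hms).integrable_map_iff (g := f) (μ := μ.comap (↑))
    rw [map_comap_subtype_coe hms, restrict_compl_singleton] at this
    exact this.1 hf
  have hG : Integrable G (μ.toSphere.prod (.volumeIoiPow (finrank ℝ V - 1))) := by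
    rw [← hμ.integrable_comp_emb (Homeomorph.measurableEmbedding _)]
    exact hf_compl.congr (Eventually.of_forall fun x => (hGf x).symm)
  calc ∫ x, f x ∂μ = ∫ x : ({0}ᶜ : Set V), f x ∂(μ.comap (↑)) := by
        rw [integral_subtype_comap hms, restrict_compl_singleton]
    _ = ∫ p, G p ∂(μ.toSphere.prod (.volumeIoiPow (finrank ℝ V - 1))) := by
        rw [← hμ.integral_comp (Homeomorph.measurableEmbedding _) G]
        exact integral_congr_ae (Eventually.of_forall fun x => (hGf x).symm)
    _ = ∫ r : Ioi (0 : ℝ), ∫ ω, G (ω, r) ∂μ.toSphere ∂(.volumeIoiPow (finrank ℝ V - 1)) :=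
        integral_prod_symm G hG
    _ = _ := by
        simp only [G, Measure.volumeIoiPow, ENNReal.ofReal]
        rw [integral_withDensity_eq_integral_smul
            ((measurable_subtype_coe.pow_const _).real_toNNReal),
          integral_subtype_comap measurableSet_Ioi (fun r : ℝ => (r ^ (finrank ℝ V - 1)).toNNReal •
            ∫ ω, f (r • (ω : V)) ∂μ.toSphere)]
        refine setIntegral_congr_fun measurableSet_Ioi fun r hr => ?_
        rw [NNReal.smul_def, Real.coe_toNNReal _ (pow_nonneg (le_of_lt hr) _)]

end Polar

theorem ContDiff.indicator_Ioi_of_eventuallyEq_zero {E : Type*} [NormedAddCommGroup E]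
    [NormedSpace ℝ E] {n : WithTop ℕ∞} {f : ℝ → E} (hf : ContDiff ℝ n f) (h0 : f =ᶠ[𝓝 0] 0) :
    ContDiff ℝ n ((Ioi 0).indicator f) := by
  refine contDiff_iff_contDiffAt.2 fun x => ?_
  rcases lt_or_ge 0 x with hx | hx
  · exact hf.contDiffAt.congr_of_eventuallyEq <|
      eventually_of_mem (Ioi_mem_nhds hx) fun y hy => indicator_of_mem hy f
  · refine contDiffAt_const (c := (0 : E)).congr_of_eventuallyEq ?_
    rcases hx.lt_or_eq with hx | rfl
    · exact eventually_of_mem (Iio_mem_nhds hx) fun y hy => indicator_of_notMem (not_lt.2 hy.le) f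
    · exact h0.mono fun y hy => indicator_apply_eq_zero.2 fun _ => hy

section RadialProfile

variable {V : Type*} [NormedAddCommGroup V] [NormedSpace ℝ V] [MeasurableSpace V]
  {E : Type*} [NormedAddCommGroup E] [NormedSpace ℝ E]

theorem integral_sphere_comp_smul_eq_zero {ν : Measure (Metric.sphere (0 : V) 1)} {g : V → E}
    {r : ℝ} (hg : ∀ v : V, ‖v‖ = |r| → g v = 0) : ∫ ω, g (r • (ω : V)) ∂ν = 0 := by
  refine integral_eq_zero_of_ae (ae_of_all _ fun ω => hg _ ?_)
  rw [norm_smul, norm_eq_of_mem_sphere ω, mul_one, Real.norm_eq_abs]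

variable (μ : Measure V)

/-- By polar coordinates, the density of the pushforward of `g μ` under `‖·‖`. -/
noncomputable def radialProfile (g : V → E) : ℝ → E :=
  (Ioi 0).indicator fun r => r ^ (finrank ℝ V - 1) • ∫ ω, g (r • (ω : V)) ∂μ.toSphere

variable {μ}

theorem HasCompactSupport.radialProfile {g : V → E} (hg : HasCompactSupport g) :
    HasCompactSupport (radialProfile μ g) := by
  obtain ⟨R, hR⟩ := hg.isBounded.subset_closedBall 0
  refine HasCompactSupport.intro (isCompact_closedBall (0 : ℝ) R) fun r hr => ?_
  rw [Metric.mem_closedBall, dist_zero_right, Real.norm_eq_abs, not_le] at hr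
  refine indicator_apply_eq_zero.2 fun _ => ?_
  rw [integral_sphere_comp_smul_eq_zero fun v hv => ?_, smul_zero]
  refine image_eq_zero_of_notMem_tsupport fun hv' => ?_
  have := hR hv'
  rw [Metric.mem_closedBall, dist_zero_right, hv] at this
  linarith

theorem ContDiff.radialProfile [FiniteDimensional ℝ V] [BorelSpace V] [μ.IsAddHaarMeasure]
    {n : ℕ} {g : V → E} (hg : ContDiff ℝ n g) (hg0 : (0 : V) ∉ tsupport g) :
    ContDiff ℝ n (radialProfile μ g) := by
  refine ContDiff.indicator_Ioi_of_eventuallyEq_zero ((contDiff_id.pow _).smul <|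
    contDiff_integral_comp_prodMk (A := fun p => g (p.1 • p.2)) continuous_subtype_val
      (hg.comp (contDiff_fst.smul contDiff_snd))) ?_
  obtain ⟨a, ha, hball⟩ := Metric.isOpen_iff.1 (isClosed_tsupport g).isOpen_compl 0 hg0
  filter_upwards [Metric.ball_mem_nhds (0 : ℝ) ha] with r hr
  rw [Pi.zero_apply, integral_sphere_comp_smul_eq_zero fun v hv => ?_, smul_zero]
  refine image_eq_zero_of_notMem_tsupport (hball ?_)
  rwa [Metric.mem_ball, dist_zero_right, hv, ← Real.norm_eq_abs, ← dist_zero_right]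

theorem integral_smul_norm_eq_integral_smul_radialProfile [FiniteDimensional ℝ V] [Nontrivial V]
    [BorelSpace V] [μ.IsAddHaarMeasure] {𝕜 : Type*} [RCLike 𝕜] [NormedSpace 𝕜 E]
    [SMulCommClass ℝ 𝕜 E] {g : V → E} (φ : ℝ → 𝕜)
    (hint : Integrable (fun x => φ ‖x‖ • g x) μ) :
    ∫ x, φ ‖x‖ • g x ∂μ = ∫ r, φ r • radialProfile μ g r := by
  simp only [radialProfile, ← indicator_smul_apply]
  rw [integral_indicator measurableSet_Ioi,
    integral_eq_integral_Ioi_pow_smul_integral_sphere μ hint]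
  refine setIntegral_congr_fun measurableSet_Ioi fun r (hr : 0 < r) => ?_
  have hnorm : ∀ ω : Metric.sphere (0 : V) 1, ‖r • (ω : V)‖ = r := fun ω => by
    rw [norm_smul, norm_eq_of_mem_sphere ω, mul_one, Real.norm_of_nonneg hr.le]
  simp only [hnorm, integral_smul]
  exact smul_comm _ _ _

end RadialProfile

theorem Real.integrable_fourier_of_contDiff_two {E : Type*} [NormedAddCommGroup E]
    [NormedSpace ℂ E] {f : ℝ → E} (hf : ContDiff ℝ 2 f) (hfc : HasCompactSupport f) :
    Integrable (𝓕 f) := by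
  have hint : ∀ n : ℕ, n ≤ (2 : ℕ∞) → Integrable (iteratedDeriv n f) := fun n hn =>
    (hf.continuous_iteratedDeriv n (mod_cast hn)).integrable_of_hasCompactSupport
      ((hfc.iteratedFDeriv (𝕜 := ℝ) n).mono' fun x hx => subset_tsupport _ fun h => hx (by
        simp [iteratedDeriv_eq_iteratedFDeriv, h]))
  set C₀ := ∫ x, ‖f x‖
  set C₂ := ∫ x, ‖iteratedDeriv 2 f x‖
  have h2 := fourier_iteratedDeriv (N := 2) (n := 2) hf hint le_rfl
  have hbound : ∀ ξ : ℝ, ‖𝓕 f ξ‖ ≤ (C₀ + C₂) * (1 + (2 * π * ξ) ^ 2)⁻¹ := fun ξ => by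
    have h0 : ‖𝓕 f ξ‖ ≤ C₀ := VectorFourier.norm_fourierIntegral_le_integral_norm _ _ _ _ _
    have h2' : (2 * π * ξ) ^ 2 * ‖𝓕 f ξ‖ ≤ C₂ := by
      have h : ‖𝓕 (iteratedDeriv 2 f) ξ‖ ≤ C₂ :=
        VectorFourier.norm_fourierIntegral_le_integral_norm _ _ _ _ _
      rw [h2, norm_smul, norm_pow] at h
      simpa [Real.norm_eq_abs, abs_of_pos Real.pi_pos, mul_pow, sq_abs] using h
    rw [← div_eq_mul_inv, le_div_iff₀ (by positivity)]
    nlinarith [norm_nonneg (𝓕 f ξ)]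
  refine ((integrable_inv_one_add_sq.comp_mul_left' (by positivity : 2 * π ≠ 0)).const_mul
    (C₀ + C₂)).mono' ?_ (ae_of_all _ hbound)
  exact (VectorFourier.fourierIntegral_continuous Real.continuous_fourierChar (by fun_prop)
    (hint 0 (by simp))).aestronglyMeasurable

theorem integral_cexp_norm_smul_eq_fourier_radialProfile {V : Type*} [NormedAddCommGroup V]
    [NormedSpace ℝ V] [FiniteDimensional ℝ V] [Nontrivial V] [MeasurableSpace V]
    [BorelSpace V] (μ : Measure V) [μ.IsAddHaarMeasure] {E : Type*} [NormedAddCommGroup E]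
    [NormedSpace ℂ E] {g : V → E} (hg : Continuous g) (hgc : HasCompactSupport g) (s : ℝ) :
    ∫ k, Complex.exp (-(Complex.I * s * ‖k‖)) • g k ∂μ = 𝓕 (radialProfile μ g) (s / (2 * π)) := by
  rw [integral_smul_norm_eq_integral_smul_radialProfile
      (fun r => Complex.exp (-(Complex.I * s * r)))
    ((by fun_prop : Continuous fun k => Complex.exp (-(Complex.I * s * ‖k‖)) • g k)
      |>.integrable_of_hasCompactSupport hgc.smul_left),
    Real.fourier_real_eq_integral_exp_smul]
  congr with r
  congr 2
  push_cast
  field_simp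

theorem time_integrability_of_oscillatory_integral_general
    {E : Type*} [NormedAddCommGroup E] [NormedSpace ℂ E]
    (g : EuclideanSpace ℝ (Fin 3) → E)
    (hg : ContDiff ℝ 2 g)
    (hgc : HasCompactSupport g)
    (hg0 : (0 : EuclideanSpace ℝ (Fin 3)) ∉ tsupport g) :
    Integrable (fun s : ℝ => ∫ k : EuclideanSpace ℝ (Fin 3),
        Complex.exp (-(Complex.I * (s : ℂ) * ((‖k‖ : ℝ) : ℂ))) • g k) ∧
    Tendsto
      (fun t : ℝ => ∫ s in (-t)..t, ∫ k : EuclideanSpace ℝ (Fin 3),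
        Complex.exp (-(Complex.I * (s : ℂ) * ((‖k‖ : ℝ) : ℂ))) • g k)
      atTop
      (𝓝 (∫ s : ℝ, ∫ k : EuclideanSpace ℝ (Fin 3),
        Complex.exp (-(Complex.I * (s : ℂ) * ((‖k‖ : ℝ) : ℂ))) • g k)) := by
  have hint : Integrable fun s : ℝ => ∫ k : EuclideanSpace ℝ (Fin 3),
      Complex.exp (-(Complex.I * (s : ℂ) * ((‖k‖ : ℝ) : ℂ))) • g k := by
    simp only [integral_cexp_norm_smul_eq_fourier_radialProfile volume hg.continuous hgc]
    exact (Real.integrable_fourier_of_contDiff_two (hg.radialProfile hg0)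
      hgc.radialProfile).comp_div (by positivity)
  exact ⟨hint, intervalIntegral_tendsto_integral hint tendsto_neg_atTop_atBot tendsto_id⟩

/-- For `g : ℝ³ → E` twice continuously differentiable with compact support away from
the origin, the function `s ↦ ∫ e^{-is|k|} g(k) dk` is Bochner integrable on `ℝ`, and
`lim_{t→∞} ∫_{-t}^{t} (∫ e^{-is|k|} g(k) dk) ds` exists and equals its Bochner integral
over all of `ℝ`. -/
theorem time_integrability_of_oscillatory_integral
    {E : Type*} [NormedAddCommGroup E] [NormedSpace ℂ E] [CompleteSpace E]
    (g : EuclideanSpace ℝ (Fin 3) → E)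
    (hg : ContDiff ℝ 2 g)
    (hgc : HasCompactSupport g)
    (hg0 : (0 : EuclideanSpace ℝ (Fin 3)) ∉ tsupport g) :
    Integrable (fun s : ℝ => ∫ k : EuclideanSpace ℝ (Fin 3),
        Complex.exp (-(Complex.I * (s : ℂ) * ((‖k‖ : ℝ) : ℂ))) • g k) ∧
    Tendsto
      (fun t : ℝ => ∫ s in (-t)..t, ∫ k : EuclideanSpace ℝ (Fin 3),
        Complex.exp (-(Complex.I * (s : ℂ) * ((‖k‖ : ℝ) : ℂ))) • g k)
      atTop
      (𝓝 (∫ s : ℝ, ∫ k : EuclideanSpace ℝ (Fin 3),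
        Complex.exp (-(Complex.I * (s : ℂ) * ((‖k‖ : ℝ) : ℂ))) • g k)) :=
  time_integrability_of_oscillatory_integral_general g hg hgc hg0
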